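/- arXiv:1807.11931 — 4 statements merged into one kernel-verified Lean document; each statement's English description precedes it below -/
import Mathlib

section
/- Let M be a nondegenerate integral lattice (a free abelian group of finite rank with a nondegenerate symmetric bilinear integer-valued form), and let v ∈ M with v·v ≠ 0. Let d = gcd{v·w : w ∈ M}. Then det(v^⊥) = (v·v / d²) · det(M), where v^⊥ is the orthogonal complement of v in M and det denotes the absolute value of the determinant of a Gram matrix. -/
/-!
Choose `w₀` with `v·w₀ = d`. Every `x` splits as `(v·x / d) w₀ + p` with `p ∈ v^⊥`, so `w₀`
followed by a basis `b` of `v^⊥` spans `ℤⁿ` and its matrix `P` is unimodular. Splitting `v` the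
same way, the matrix with rows `(v, b)` has determinant `(v·v / d) det P`, hence Gram determinant
`(v·v / d)² det A`. Since `v ⟂ b`, that Gram matrix is block diagonal, with determinant
`v·v · det(v^⊥)`.
-/

open BigOperators Matrix

/-- The bilinear form on `Fin n → ℤ` determined by the Gram matrix `A`. -/
def bilin (n : ℕ) (A : Matrix (Fin n) (Fin n) ℤ) (x y : Fin n → ℤ) : ℤ :=
  x ⬝ᵥ A.mulVec y

/-- The orthogonal complement of `v` in the lattice `(Fin n → ℤ, A)`. -/
def perp (n : ℕ) (A : Matrix (Fin n) (Fin n) ℤ) (v : Fin n → ℤ) :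
    Submodule ℤ (Fin n → ℤ) where
  carrier := {x | bilin n A v x = 0}
  add_mem' := by
    intro a b ha hb
    simp only [Set.mem_setOf_eq, bilin, Matrix.mulVec_add, dotProduct_add] at *
    omega
  zero_mem' := by simp [bilin]
  smul_mem' := by
    intro c x hx
    simp only [Set.mem_setOf_eq, bilin] at *
    rw [Matrix.mulVec_smul, dotProduct_smul, hx, smul_zero]

section Determinant

variable {R : Type*} [CommRing R]

lemma isUnit_det_of_span_rows_eq_top {ι : Type*} [Fintype ι] [DecidableEq ι]
    (P : Matrix ι ι R) (hP : Submodule.span R (Set.range P) = ⊤) : IsUnit P.det := by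
  choose c hc using fun j : ι =>
    (Submodule.mem_span_range_iff_exists_fun R).1 (hP ▸ Submodule.mem_top (x := Pi.single j 1))
  refine Matrix.isUnit_det_of_left_inverse (B := Matrix.of c) (Matrix.ext fun j l => ?_)
  simpa [Matrix.mul_apply, Matrix.one_apply, Pi.single_apply, eq_comm] using congrFun (hc j) l

lemma det_of_cons_smul_add_of_mem_span {m : ℕ} (f : Fin m → Fin (m + 1) → R) (c : R)
    (x : Fin (m + 1) → R) {y : Fin (m + 1) → R} (hy : y ∈ Submodule.span R (Set.range f)) :
    (Matrix.of (Fin.cons (c • x + y) f)).det = c * (Matrix.of (Fin.cons x f)).det := by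
  let L := Matrix.detRowAlternating.toMultilinearMap.toLinearMap (Fin.cons 0 f) 0
  have hL (z : Fin (m + 1) → R) : L z = (Matrix.of (Fin.cons z f)).det := by
    simp only [L, MultilinearMap.toLinearMap_apply, Fin.update_cons_zero]
    rfl
  have hker : Submodule.span R (Set.range f) ≤ LinearMap.ker L := by
    rw [Submodule.span_le]
    rintro _ ⟨i, rfl⟩
    exact (hL _).trans (Matrix.det_zero_of_row_eq (Fin.succ_ne_zero i).symm rfl)
  rw [← hL, ← hL, map_add, map_smul, LinearMap.mem_ker.1 (hker hy), add_zero, smul_eq_mul]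

lemma det_eq_mul_det_submatrix_succ_of_row_zero {m : ℕ}
    (M : Matrix (Fin (m + 1)) (Fin (m + 1)) R) (h : ∀ j : Fin m, M 0 j.succ = 0) :
    M.det = M 0 0 * (M.submatrix Fin.succ Fin.succ).det := by
  rw [Matrix.det_succ_row_zero, Fin.sum_univ_succ]
  simp [h]

end Determinant

section Lattice

variable {n : ℕ} {A : Matrix (Fin n) (Fin n) ℤ} {v : Fin n → ℤ}

def bilinGram (n : ℕ) (A : Matrix (Fin n) (Fin n) ℤ) {ι : Type*} (f : ι → Fin n → ℤ) :
    Matrix ι ι ℤ :=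
  Matrix.of fun i j => bilin n A (f i) (f j)

lemma bilinGram_eq_mul_mul_transpose (f : Fin n → Fin n → ℤ) :
    bilinGram n A f = Matrix.of f * A * (Matrix.of f)ᵀ := by
  ext i j
  rw [Matrix.mul_mul_apply, Matrix.transpose_transpose]
  rfl

lemma det_bilinGram (f : Fin n → Fin n → ℤ) :
    (bilinGram n A f).det = (Matrix.of f).det ^ 2 * A.det := by
  rw [bilinGram_eq_mul_mul_transpose, Matrix.det_mul, Matrix.det_mul, Matrix.det_transpose]
  ring

lemma mem_perp {x : Fin n → ℤ} : x ∈ perp n A v ↔ bilin n A v x = 0 := Iff.rfl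

lemma bilin_sub_smul_right (c : ℤ) (x y : Fin n → ℤ) :
    bilin n A v (x - c • y) = bilin n A v x - c * bilin n A v y := by
  rw [bilin, Matrix.mulVec_sub, Matrix.mulVec_smul, dotProduct_sub, dotProduct_smul, smul_eq_mul]
  rfl

lemma sub_ediv_smul_mem_perp {d : ℤ} (hdvd : ∀ w, d ∣ bilin n A v w) {w₀ : Fin n → ℤ}
    (hw₀ : bilin n A v w₀ = d) (x : Fin n → ℤ) : x - (bilin n A v x / d) • w₀ ∈ perp n A v := by
  rw [mem_perp, bilin_sub_smul_right, hw₀, Int.ediv_mul_cancel (hdvd x), sub_self]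

lemma span_range_coe_basis {ι : Type*} (b : Module.Basis ι ℤ (perp n A v)) :
    Submodule.span ℤ (Set.range fun i => (b i : Fin n → ℤ)) = perp n A v := by
  rw [show (fun i => (b i : Fin n → ℤ)) = (perp n A v).subtype ∘ b from rfl, Set.range_comp,
    Submodule.span_image, b.span_eq, Submodule.map_subtype_top]

end Lattice

lemma det_bilinGram_cons_of_forall_mem_perp {m : ℕ} {A : Matrix (Fin (m + 1)) (Fin (m + 1)) ℤ}
    {v : Fin (m + 1) → ℤ} {f : Fin m → Fin (m + 1) → ℤ} (hf : ∀ i, f i ∈ perp (m + 1) A v) :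
    (bilinGram (m + 1) A (Fin.cons v f)).det
      = bilin (m + 1) A v v * (bilinGram (m + 1) A f).det :=
  det_eq_mul_det_submatrix_succ_of_row_zero _ hf

lemma span_cons_basis_perp_eq_top {m : ℕ} {A : Matrix (Fin (m + 1)) (Fin (m + 1)) ℤ}
    {v : Fin (m + 1) → ℤ} {d : ℤ} (hdvd : ∀ w, d ∣ bilin (m + 1) A v w) {w₀ : Fin (m + 1) → ℤ}
    (hw₀ : bilin (m + 1) A v w₀ = d) (b : Module.Basis (Fin m) ℤ (perp (m + 1) A v)) :
    Submodule.span ℤ (Set.range (Fin.cons w₀ fun i => (b i : Fin (m + 1) → ℤ))) = ⊤ := by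
  rw [Fin.range_cons, Submodule.span_insert, span_range_coe_basis, eq_top_iff]
  intro x _
  exact add_sub_cancel ((bilin (m + 1) A v x / d) • w₀) x ▸ Submodule.add_mem_sup
    (Submodule.smul_mem _ _ (Submodule.mem_span_singleton_self w₀))
    (sub_ediv_smul_mem_perp hdvd hw₀ x)

theorem stmt0_general (n : ℕ) (A : Matrix (Fin n) (Fin n) ℤ) (v : Fin n → ℤ) (hv : bilin n A v v ≠ 0)
    (d : ℤ) (hdvd : ∀ w, d ∣ bilin n A v w)
    (hmem : ∃ w, bilin n A v w = d)
    (b : Module.Basis (Fin (n - 1)) ℤ (perp n A v)) :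
    ((Matrix.of fun i j => bilin n A (b i) (b j)).det).natAbs * d.natAbs ^ 2
      = (bilin n A v v).natAbs * A.det.natAbs := by
  obtain ⟨m, rfl⟩ : ∃ m, n = m + 1 :=
    Nat.exists_eq_succ_of_ne_zero (by rintro rfl; simp [bilin] at hv)
  obtain ⟨w₀, hw₀⟩ := hmem
  set a := bilin (m + 1) A v v / d
  set bv : Fin m → Fin (m + 1) → ℤ := fun i => b i
  have hunit : IsUnit (Matrix.of (Fin.cons w₀ bv)).det :=
    isUnit_det_of_span_rows_eq_top _ (span_cons_basis_perp_eq_top hdvd hw₀ b)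
  have hrow : (Matrix.of (Fin.cons v bv)).det = a * (Matrix.of (Fin.cons w₀ bv)).det := by
    conv_lhs => rw [← add_sub_cancel (a • w₀) v]
    exact det_of_cons_smul_add_of_mem_span bv a w₀ <| by
      rw [span_range_coe_basis]; exact sub_ediv_smul_mem_perp hdvd hw₀ v
  have hgram : bilin (m + 1) A v v * (bilinGram (m + 1) A bv).det = a ^ 2 * A.det := by
    rw [← det_bilinGram_cons_of_forall_mem_perp (f := bv) fun i => (b i).2, det_bilinGram, hrow,
      mul_pow, Int.isUnit_sq hunit, mul_one]
  have ha : d * a = bilin (m + 1) A v v := Int.mul_ediv_cancel' (hdvd v)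
  have hcancel : (bilinGram (m + 1) A bv).det * d ^ 2 = bilin (m + 1) A v v * A.det :=
    mul_left_cancel₀ hv <| by
      linear_combination d ^ 2 * hgram + (d * a + bilin (m + 1) A v v) * A.det * ha
  change (bilinGram (m + 1) A bv).det.natAbs * _ = _
  simpa [Int.natAbs_mul, Int.natAbs_pow] using congrArg Int.natAbs hcancel

/-- For a nondegenerate integral lattice `(Fin n → ℤ, A)` and `v` with
`v·v ≠ 0`, letting `d = gcd {v·w : w}`, one has `det(v^⊥) · d² = |v·v| · det(M)`
(determinants taken as absolute values of Gram determinants). -/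
theorem stmt0 (n : ℕ) (A : Matrix (Fin n) (Fin n) ℤ) (hA : A.IsSymm)
    (hnd : A.det ≠ 0) (v : Fin n → ℤ) (hv : bilin n A v v ≠ 0)
    (d : ℤ) (hd : 0 < d) (hdvd : ∀ w, d ∣ bilin n A v w)
    (hmem : ∃ w, bilin n A v w = d)
    (b : Module.Basis (Fin (n - 1)) ℤ (perp n A v)) :
    ((Matrix.of fun i j => bilin n A (b i) (b j)).det).natAbs * d.natAbs ^ 2
      = (bilin n A v v).natAbs * A.det.natAbs :=
  stmt0_general n A v hv d hdvd hmem b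
end

section
/- Let L be a nondegenerate integral lattice, v ∈ L with ℓ = v·v ≠ 0, and let N = v^⊥ ⊕ ℤv ⊆ L (the internal direct sum of the orthogonal complement of v and the span of v). Let d = gcd{v·w : w ∈ L}. Then the index [L : N] equals ℓ/d. -/
open BigOperators Matrix

/-! Since `d` divides every value of the form `x ↦ v·x`, it factors as `d • g` with `g : L → ℤ`
surjective (because `d` is attained), and `v^⊥ = ker g`. For a linear form `g`, an element `x` lies
in `ker g + ℤv` exactly when `g x ∈ ℤ · g v`, so `N` is the preimage of `g(v)ℤ` under the
surjection `g` and `[L : N] = [ℤ : g(v)ℤ] = |g v| = |ℓ / d|`. -/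

open LinearMap

theorem LinearMap.ker_sup_span_singleton_eq_comap {R M : Type*} [CommRing R] [AddCommGroup M]
    [Module R M] (f : M →ₗ[R] R) (v : M) :
    ker f ⊔ R ∙ v = (R ∙ f v).comap f := by
  ext x
  simp only [Submodule.mem_sup, Submodule.mem_comap, Submodule.mem_span_singleton, mem_ker]
  constructor
  · rintro ⟨y, hy, _, ⟨k, rfl⟩, rfl⟩
    exact ⟨k, by simp [hy]⟩
  · rintro ⟨k, hk⟩
    exact ⟨x - k • v, by rw [map_sub, map_smul, hk, sub_self], k • v, ⟨k, rfl⟩, sub_add_cancel x _⟩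

theorem LinearMap.index_ker_sup_span_singleton {M : Type*} [AddCommGroup M] (g : M →ₗ[ℤ] ℤ)
    (hg : Function.Surjective g) (v : M) :
    (ker g ⊔ ℤ ∙ v).toAddSubgroup.index = (g v).natAbs := by
  have hcomap : ((ℤ ∙ g v).comap g).toAddSubgroup =
      (AddSubgroup.zmultiples (g v)).comap g.toAddMonoidHom := by
    rw [← Submodule.span_singleton_toAddSubgroup_eq_zmultiples]
    rfl
  rw [ker_sup_span_singleton_eq_comap, hcomap, AddSubgroup.index_comap_of_surjective _ hg,
    Int.index_zmultiples]

theorem LinearMap.exists_eq_smul_of_forall_dvd {R M : Type*} [CommRing R] [IsDomain R]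
    [AddCommGroup M] [Module R M] (f : M →ₗ[R] R) {d : R} (hd : d ≠ 0) (h : ∀ x, d ∣ f x) :
    ∃ g : M →ₗ[R] R, f = d • g := by
  choose g hg using h
  refine ⟨{ toFun := g, map_add' := fun x y => ?_, map_smul' := fun c x => ?_ }, ?_⟩
  · apply mul_left_cancel₀ hd
    rw [← hg, mul_add, ← hg, ← hg, map_add]
  · apply mul_left_cancel₀ hd
    rw [← hg, smul_eq_mul, RingHom.id_apply, mul_left_comm, ← hg, map_smul, smul_eq_mul]
  · ext x
    exact hg x

theorem bilin_eq_toLinearMap₂' (n : ℕ) (A : Matrix (Fin n) (Fin n) ℤ) (v : Fin n → ℤ) :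
    bilin n A v = Matrix.toLinearMap₂' ℤ A v :=
  funext fun x => (Matrix.toLinearMap₂'_apply' A v x).symm

theorem perp_eq_ker (n : ℕ) (A : Matrix (Fin n) (Fin n) ℤ) (v : Fin n → ℤ) :
    perp n A v = ker (Matrix.toLinearMap₂' ℤ A v) := by
  ext x
  simp [perp, bilin_eq_toLinearMap₂']

theorem stmt1_general (n : ℕ) (A : Matrix (Fin n) (Fin n) ℤ)
    (v : Fin n → ℤ)
    (d : ℤ) (hd : 0 < d) (hdvd : ∀ w, d ∣ bilin n A v w)
    (hmem : ∃ w, bilin n A v w = d)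
    (N : Submodule ℤ (Fin n → ℤ))
    (hN : N = perp n A v ⊔ Submodule.span ℤ {v}) :
    (N.toAddSubgroup).index = ((bilin n A v v) / d).natAbs := by
  rw [bilin_eq_toLinearMap₂'] at hdvd hmem ⊢
  obtain ⟨g, hfg⟩ := (Matrix.toLinearMap₂' ℤ A v).exists_eq_smul_of_forall_dvd hd.ne' hdvd
  have hsurj : Function.Surjective g := by
    obtain ⟨w, hw⟩ := hmem
    have hgw : g w = 1 := mul_left_cancel₀ hd.ne' (by simpa [hfg] using hw)
    exact fun m => ⟨m • w, by rw [map_zsmul, hgw, smul_eq_mul, mul_one]⟩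
  have hker : ker (d • g) = ker g := by
    ext x
    simp [hd.ne']
  rw [hN, perp_eq_ker, hfg, hker, g.index_ker_sup_span_singleton hsurj, LinearMap.smul_apply,
    smul_eq_mul, Int.mul_ediv_cancel_left _ hd.ne']

/-- For a nondegenerate lattice `L`, `v ∈ L` with `ℓ = v·v ≠ 0`, and
`N = v^⊥ ⊕ ℤv ⊆ L`, with `d = gcd{v·w : w ∈ L}`, the index `[L : N]` equals `ℓ/d`. -/
theorem stmt1 (n : ℕ) (A : Matrix (Fin n) (Fin n) ℤ) (hA : A.IsSymm)
    (hnd : A.det ≠ 0) (v : Fin n → ℤ) (hv : bilin n A v v ≠ 0)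
    (d : ℤ) (hd : 0 < d) (hdvd : ∀ w, d ∣ bilin n A v w)
    (hmem : ∃ w, bilin n A v w = d)
    (N : Submodule ℤ (Fin n → ℤ))
    (hN : N = perp n A v ⊔ Submodule.span ℤ {v}) :
    (N.toAddSubgroup).index = ((bilin n A v v) / d).natAbs :=
  stmt1_general n A v d hd hdvd hmem N hN
end

section
/- Let L be an odd nondegenerate integral lattice and v a primitive element of L in the sense that there exists z ∈ L with v·z = 1. If the orthogonal complement v^⊥ ⊂ L is an even lattice, then v is characteristic, i.e., v·x ≡ x·x (mod 2) for all x ∈ L. -/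
open BigOperators Matrix

lemma bilin_symm (n : ℕ) (A : Matrix (Fin n) (Fin n) ℤ) (hA : A.IsSymm) (x y : Fin n → ℤ) :
    bilin n A x y = bilin n A y x := by
  unfold bilin
  rw [Matrix.dotProduct_mulVec, ← hA.eq, Matrix.vecMul_transpose, dotProduct_comm, hA.eq]

lemma bilin_expand (n : ℕ) (A : Matrix (Fin n) (Fin n) ℤ) (x z : Fin n → ℤ) (c : ℤ) :
    bilin n A (x - c • z) (x - c • z)
      = bilin n A x x - c * bilin n A x z - c * bilin n A z x + c * c * bilin n A z z := by
  unfold bilin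
  simp only [Matrix.mulVec_sub, Matrix.mulVec_smul, dotProduct_sub, sub_dotProduct,
    dotProduct_smul, smul_dotProduct, smul_eq_mul]
  ring

lemma bilin_right (n : ℕ) (A : Matrix (Fin n) (Fin n) ℤ) (v x z : Fin n → ℤ) (c : ℤ) :
    bilin n A v (x - c • z) = bilin n A v x - c * bilin n A v z := by
  unfold bilin
  simp only [Matrix.mulVec_sub, Matrix.mulVec_smul, dotProduct_sub, dotProduct_smul, smul_eq_mul]

/-- If `L` is an odd nondegenerate integral lattice, `v` is primitive
(there is `z` with `v·z = 1`), and the orthogonal complement of `v` is even, then `v`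
is characteristic: `v·x ≡ x·x (mod 2)` for all `x`. -/
theorem stmt2 (n : ℕ) (A : Matrix (Fin n) (Fin n) ℤ) (hA : A.IsSymm)
    (hnd : A.det ≠ 0) (hodd : ∃ x, Odd (bilin n A x x))
    (v : Fin n → ℤ) (hprim : ∃ z, bilin n A v z = 1)
    (hperp : ∀ w, bilin n A v w = 0 → Even (bilin n A w w)) :
    ∀ x, bilin n A v x ≡ bilin n A x x [ZMOD 2] := by
  obtain ⟨z, hz⟩ := hprim
  have hsq : ∀ a : ZMod 2, a * a = a := by decide
  have h01 : ∀ a : ZMod 2, a = 0 ∨ a = 1 := by decide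
  have key : ∀ x, ((bilin n A x x : ℤ) : ZMod 2)
      = ((bilin n A v x : ℤ) : ZMod 2) * ((bilin n A z z : ℤ) : ZMod 2) := by
    intro x
    set c := bilin n A v x with hc
    have hw0 : bilin n A v (x - c • z) = 0 := by
      rw [bilin_right, hz]; ring
    obtain ⟨k, hk⟩ := hperp _ hw0
    have hexp := bilin_expand n A x z c
    rw [hk] at hexp
    have hint : bilin n A x x
        = (k + k) + c * bilin n A x z + c * bilin n A z x - c * c * bilin n A z z := by
      linarith [hexp]
    have hsym := bilin_symm n A hA x z
    calc ((bilin n A x x : ℤ) : ZMod 2)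
        = (((k + k) + c * bilin n A x z + c * bilin n A z x
            - c * c * bilin n A z z : ℤ) : ZMod 2) := by rw [hint]
      _ = ((c : ZMod 2) * (c : ZMod 2)) * ((bilin n A z z : ℤ) : ZMod 2) := by
          push_cast
          rw [hsym]
          ring_nf
          simp [show (2 : ZMod 2) = 0 from rfl, CharTwo.neg_eq]
      _ = ((c : ℤ) : ZMod 2) * ((bilin n A z z : ℤ) : ZMod 2) := by rw [hsq]
  have hzz : ((bilin n A z z : ℤ) : ZMod 2) = 1 := by
    obtain ⟨x0, m, hm⟩ := hodd
    have h1 : ((bilin n A x0 x0 : ℤ) : ZMod 2) = 1 := by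
      rw [hm]; push_cast
      rw [show ((2 : ZMod 2)) = 0 from rfl]
      ring
    rcases h01 ((bilin n A z z : ℤ) : ZMod 2) with h | h
    · exfalso
      have := key x0
      rw [h1, h, mul_zero] at this
      exact one_ne_zero this
    · exact h
  intro x
  have := (ZMod.intCast_eq_intCast_iff (bilin n A v x) (bilin n A x x) 2).mp
    (by rw [key x, hzz, mul_one])
  simpa using this
end

section
/- There is no vector v in the lattice D₅ = {x ∈ ℤ⁵ : Σxᵢ even} with v·v = 20 whose orthogonal complement in D₅ has determinant 5, except those whose orthogonal complement is isomorphic to A₄. Precisely: if v ∈ D₅ satisfies v·v = 20 and det(v^⊥) = 5, then v^⊥ ≅ A₄. -/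
/-!
Signed permutations of the coordinates preserve `ip`, hence also `D₅` (since `Σ xᵢ ≡ x·x mod 2`),
so they carry `v^⊥` isometrically onto `(σ v)^⊥`; taking absolute values and sorting brings `v` to
one of `(2,2,2,2,2)`, `(1,1,1,1,4)`, `(0,1,1,3,3)`, `(0,0,0,2,4)`. For the first, `v^⊥` is exactly
`A₄`. For each of the others, `v^⊥` lies in the span of four explicit vectors with Gram determinant
`80`, `80` or `20`; the Gram determinant of a basis of `v^⊥` is that number times a square, so it is
even and cannot be `±5`.
-/

open BigOperators

/-- The Euclidean inner product on `Fin 5 → ℤ`. -/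
def ip (x y : Fin 5 → ℤ) : ℤ := ∑ i, x i * y i

/-- The orthogonal complement of `v` inside `D₅ = {x ∈ ℤ⁵ : Σxᵢ even}`. -/
def D5perp (v : Fin 5 → ℤ) : Submodule ℤ (Fin 5 → ℤ) where
  carrier := {x | Even (∑ i, x i) ∧ ip v x = 0}
  add_mem' := by
    rintro a b ⟨ha1, ha2⟩ ⟨hb1, hb2⟩
    constructor
    · simpa [Finset.sum_add_distrib] using ha1.add hb1
    · simp only [ip, Pi.add_apply, mul_add, Finset.sum_add_distrib] at *
      omega
  zero_mem' := by simp [ip]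
  smul_mem' := by
    rintro c x ⟨hx1, hx2⟩
    constructor
    · simpa [Finset.mul_sum] using hx1.mul_left c
    · simp only [ip, smul_eq_mul, Pi.smul_apply] at *
      rw [Finset.sum_congr rfl (fun i _ => by ring_nf : ∀ i ∈ Finset.univ,
        v i * (c * x i) = c * (v i * x i))]
      rw [← Finset.mul_sum, hx2, mul_zero]

/-- The root lattice `A₄ = {x ∈ ℤ⁵ : Σxᵢ = 0}`. -/
def A4 : Submodule ℤ (Fin 5 → ℤ) where
  carrier := {x | ∑ i, x i = 0}
  add_mem' := by
    intro a b ha hb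
    simp only [Set.mem_setOf_eq, Pi.add_apply, Finset.sum_add_distrib] at *
    omega
  zero_mem' := by simp
  smul_mem' := by
    intro c x hx
    simp only [Set.mem_setOf_eq, Pi.smul_apply, smul_eq_mul] at *
    rw [← Finset.mul_sum, hx, mul_zero]

open Matrix

lemma Matrix.det_mul_transpose_dvd_of_mem_span {R ι n : Type*} [CommRing R] [Fintype ι]
    [DecidableEq ι] [Fintype n] (a b : ι → n → R)
    (hb : ∀ i, b i ∈ Submodule.span R (Set.range a)) :
    (of a * (of a)ᵀ).det ∣ (of b * (of b)ᵀ).det := by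
  choose P hP using fun i => (Submodule.mem_span_range_iff_exists_fun R).mp (hb i)
  have hbPa : of b = of P * of a := by
    ext i j
    simp [← hP i, mul_apply, Finset.sum_apply]
  have hgram : of b * (of b)ᵀ = of P * (of a * (of a)ᵀ) * (of P)ᵀ := by
    rw [hbPa, transpose_mul, Matrix.mul_assoc, Matrix.mul_assoc, Matrix.mul_assoc]
  exact ⟨(of P).det ^ 2, by rw [hgram, det_mul, det_mul, det_transpose]; ring⟩

lemma of_ip_eq_mul_transpose {ι : Type*} (b : ι → Fin 5 → ℤ) :
    of (fun i j => ip (b i) (b j)) = of b * (of b)ᵀ := rfl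

lemma even_sum_iff_even_ip_self (x : Fin 5 → ℤ) : Even (∑ i, x i) ↔ Even (ip x x) := by
  have h : Even (ip x x - ∑ i, x i) := by
    rw [ip, ← Finset.sum_sub_distrib]
    exact Finset.even_sum _ fun i _ => by simpa [mul_sub] using Int.even_mul_pred_self (x i)
  exact (Int.even_sub.mp h).symm

def IsIsometry (f : (Fin 5 → ℤ) → Fin 5 → ℤ) : Prop := ∀ x y, ip (f x) (f y) = ip x y

lemma IsIsometry.comp {f g : (Fin 5 → ℤ) → Fin 5 → ℤ} (hf : IsIsometry f) (hg : IsIsometry g) :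
    IsIsometry (f ∘ g) :=
  fun x y => (hf _ _).trans (hg x y)

lemma isIsometry_funCongrLeft (π : Equiv.Perm (Fin 5)) :
    IsIsometry (LinearEquiv.funCongrLeft ℤ ℤ π) :=
  fun x y => Equiv.sum_comp π fun i => x i * y i

lemma isIsometry_piCongrRight_smulOfUnit (s : Fin 5 → ℤˣ) :
    IsIsometry (LinearEquiv.piCongrRight fun i => LinearEquiv.smulOfUnit (s i)) := by
  refine fun x y => Finset.sum_congr rfl fun i _ => ?_
  change (s i • x i) * (s i • y i) = x i * y i
  rcases Int.units_eq_one_or (s i) with h | h <;> simp [h]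

lemma map_D5perp (σ : (Fin 5 → ℤ) ≃ₗ[ℤ] (Fin 5 → ℤ)) (hσ : IsIsometry σ) (v : Fin 5 → ℤ) :
    (D5perp v).map (σ : (Fin 5 → ℤ) →ₗ[ℤ] (Fin 5 → ℤ)) = D5perp (σ v) := by
  ext x
  obtain ⟨y, rfl⟩ := σ.surjective x
  rw [Submodule.mem_map_equiv, LinearEquiv.symm_apply_apply]
  change (Even _ ∧ _) ↔ (Even _ ∧ _)
  rw [even_sum_iff_even_ip_self, even_sum_iff_even_ip_self, hσ, hσ]

lemma exists_isIsometry_apply_eq_abs (v : Fin 5 → ℤ) :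
    ∃ σ : (Fin 5 → ℤ) ≃ₗ[ℤ] (Fin 5 → ℤ), IsIsometry σ ∧ σ v = fun i => |v i| := by
  let s : Fin 5 → ℤˣ := fun i => if v i < 0 then -1 else 1
  refine ⟨_, isIsometry_piCongrRight_smulOfUnit s, funext fun i => ?_⟩
  change s i • v i = |v i|
  by_cases h : v i < 0
  · simp [s, h, abs_of_neg]
  · simp [s, h, abs_of_nonneg (not_lt.mp h)]

lemma sorted_eq_of_sum_sq_eq_twenty {a b c d e : ℤ} (ha : 0 ≤ a) (hab : a ≤ b) (hbc : b ≤ c)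
    (hcd : c ≤ d) (hde : d ≤ e) (h : a * a + b * b + c * c + d * d + e * e = 20) :
    ![a, b, c, d, e] = ![2, 2, 2, 2, 2] ∨ ![a, b, c, d, e] = ![1, 1, 1, 1, 4] ∨
      ![a, b, c, d, e] = ![0, 1, 1, 3, 3] ∨ ![a, b, c, d, e] = ![0, 0, 0, 2, 4] := by
  have he : e ≤ 4 := by nlinarith
  have hb : 0 ≤ b := ha.trans hab
  have hc : 0 ≤ c := hb.trans hbc
  have hd : 0 ≤ d := hc.trans hcd
  have he0 : 0 ≤ e := hd.trans hde
  interval_cases e <;> interval_cases d <;> interval_cases c <;> interval_cases b <;>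
    interval_cases a <;> first | omega | decide

lemma exists_isIsometry_apply_eq_of_ip_self_eq_twenty (v : Fin 5 → ℤ) (hvv : ip v v = 20) :
    ∃ σ : (Fin 5 → ℤ) ≃ₗ[ℤ] (Fin 5 → ℤ), IsIsometry σ ∧
      (σ v = ![2, 2, 2, 2, 2] ∨ σ v = ![1, 1, 1, 1, 4] ∨
        σ v = ![0, 1, 1, 3, 3] ∨ σ v = ![0, 0, 0, 2, 4]) := by
  obtain ⟨σ, hσ, hσv⟩ := exists_isIsometry_apply_eq_abs v
  let π := Tuple.sort (σ v)
  refine ⟨σ.trans (LinearEquiv.funCongrLeft ℤ ℤ π), (isIsometry_funCongrLeft π).comp hσ, ?_⟩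
  set w := σ v ∘ π with hw
  have hmono : Monotone w := Tuple.monotone_sort (σ v)
  have hww : ip w w = 20 := (isIsometry_funCongrLeft π _ _).trans ((hσ v v).trans hvv)
  change w = _ ∨ w = _ ∨ w = _ ∨ w = _
  rw [show w = ![w 0, w 1, w 2, w 3, w 4] by ext i; fin_cases i <;> rfl]
  refine sorted_eq_of_sum_sq_eq_twenty ?_ (hmono (by decide)) (hmono (by decide))
    (hmono (by decide)) (hmono (by decide)) (by simpa [ip, Fin.sum_univ_five] using hww)
  simp [hw, hσv]

lemma D5perp_twos : D5perp ![2, 2, 2, 2, 2] = A4 := by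
  ext x
  change (Even (∑ i, x i) ∧ ip _ x = 0) ↔ ∑ i, x i = 0
  simp only [ip, Fin.sum_univ_five, Int.even_iff]
  simp only [Matrix.cons_val]
  omega

lemma D5perp_11114_le_span : D5perp ![1, 1, 1, 1, 4] ≤ Submodule.span ℤ
    (Set.range ![![1, -1, 0, 0, 0], ![0, 1, -1, 0, 0], ![0, 0, 1, -1, 0], ![-2, -2, -2, -2, 2]]) := by
  rintro x ⟨⟨m, hm⟩, hx⟩
  rw [Submodule.mem_span_range_iff_exists_fun]
  refine ⟨![x 0 + x 4, x 0 + x 1 + 2 * x 4, x 0 + x 1 + x 2 + 3 * x 4, x 4 / 2], ?_⟩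
  simp only [ip, Fin.sum_univ_five] at hx hm
  ext i; fin_cases i <;> simp [Fin.sum_univ_four] at hx ⊢ <;> omega

lemma D5perp_01133_le_span : D5perp ![0, 1, 1, 3, 3] ≤ Submodule.span ℤ
    (Set.range ![![2, 0, 0, 0, 0], ![0, 1, -1, 0, 0], ![0, 3, 0, -1, 0], ![0, 0, 0, 1, -1]]) := by
  rintro x ⟨⟨m, hm⟩, hx⟩
  rw [Submodule.mem_span_range_iff_exists_fun]
  refine ⟨![x 0 / 2, -x 2, -x 3 - x 4, -x 4], ?_⟩
  simp only [ip, Fin.sum_univ_five] at hx hm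
  ext i; fin_cases i <;> simp [Fin.sum_univ_four] at hx ⊢ <;> omega

lemma D5perp_00024_le_span : D5perp ![0, 0, 0, 2, 4] ≤ Submodule.span ℤ
    (Set.range ![![1, -1, 0, 0, 0], ![0, 1, -1, 0, 0], ![0, 0, 2, 0, 0], ![0, 0, 1, -2, 1]]) := by
  rintro x ⟨⟨m, hm⟩, hx⟩
  rw [Submodule.mem_span_range_iff_exists_fun]
  refine ⟨![x 0, x 0 + x 1, (x 0 + x 1 + x 2 - x 4) / 2, x 4], ?_⟩
  simp only [ip, Fin.sum_univ_five] at hx hm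
  ext i; fin_cases i <;> simp [Fin.sum_univ_four] at hx ⊢ <;> omega

lemma natAbs_det_gram_ne_five {w : Fin 5 → ℤ} {a : Fin 4 → Fin 5 → ℤ}
    (ha : D5perp w ≤ Submodule.span ℤ (Set.range a)) (hdet : 2 ∣ (of fun i j => ip (a i) (a j)).det)
    (b : Fin 4 → Fin 5 → ℤ) (hb : ∀ i, b i ∈ D5perp w) :
    (of fun i j => ip (b i) (b j)).det.natAbs ≠ 5 := by
  rw [of_ip_eq_mul_transpose] at hdet ⊢
  have h2 := hdet.trans (det_mul_transpose_dvd_of_mem_span a b fun i => ha (hb i))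
  omega

theorem stmt13_general (v : Fin 5 → ℤ) (hvv : ip v v = 20)
    (hdet : ∃ b : Module.Basis (Fin 4) ℤ (D5perp v),
      ((Matrix.of fun i j => ip (b i : Fin 5 → ℤ) (b j : Fin 5 → ℤ)).det).natAbs = 5) :
    ∃ e : (D5perp v) ≃ₗ[ℤ] A4,
      ∀ x y : D5perp v, ip (x : Fin 5 → ℤ) (y : Fin 5 → ℤ)
        = ip (e x : Fin 5 → ℤ) (e y : Fin 5 → ℤ) := by
  obtain ⟨σ, hσ, hσv⟩ := exists_isIsometry_apply_eq_of_ip_self_eq_twenty v hvv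
  obtain ⟨b, hb⟩ := hdet
  have hmem (x : D5perp v) : σ x ∈ D5perp (σ v) :=
    map_D5perp σ hσ v ▸ Submodule.mem_map_of_mem x.2
  have hgram : (of fun i j => ip (σ (b i)) (σ (b j))).det.natAbs = 5 := by
    rwa [show (of fun i j => ip (σ (b i)) (σ (b j))) = of fun i j => ip (b i) (b j) from
      of.injective <| funext₂ fun i j => hσ _ _]
  rcases hσv with hσv | hσv | hσv | hσv <;> rw [hσv] at hmem
  · refine ⟨(σ.submoduleMap _).trans (LinearEquiv.ofEq _ _ ?_), fun x y => (hσ x y).symm⟩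
    rw [map_D5perp σ hσ, hσv, D5perp_twos]
  · exact absurd hgram (natAbs_det_gram_ne_five D5perp_11114_le_span (by decide) _ (hmem <| b ·))
  · exact absurd hgram (natAbs_det_gram_ne_five D5perp_01133_le_span (by decide) _ (hmem <| b ·))
  · exact absurd hgram (natAbs_det_gram_ne_five D5perp_00024_le_span (by decide) _ (hmem <| b ·))

/-- If `v ∈ D₅` has `v·v = 20` and its orthogonal complement in `D₅`
has determinant `5`, then that complement is isomorphic, as a lattice, to `A₄`. -/
theorem stmt13 (v : Fin 5 → ℤ) (hvD5 : Even (∑ i, v i)) (hvv : ip v v = 20)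
    (hdet : ∃ b : Module.Basis (Fin 4) ℤ (D5perp v),
      ((Matrix.of fun i j => ip (b i : Fin 5 → ℤ) (b j : Fin 5 → ℤ)).det).natAbs = 5) :
    ∃ e : (D5perp v) ≃ₗ[ℤ] A4,
      ∀ x y : D5perp v, ip (x : Fin 5 → ℤ) (y : Fin 5 → ℤ)
        = ip (e x : Fin 5 → ℤ) (e y : Fin 5 → ℤ) :=
  stmt13_general v hvv hdet
end
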